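/- arXiv:0812.3475 — 3 statements merged into one kernel-verified Lean document; each statement's English description precedes it below -/
import Mathlib

section
/- Let X and Y be metric spaces, let f, g : X → Y be maps that are close (i.e., sup_{x ∈ X} d(f x, g x) < ∞), with f metrically proper, and let φ : Y → ℂ be a Higson function on Y. Then φ ∘ f − φ ∘ g vanishes at infinity: for every ε > 0 there exists a bounded set B ⊆ X such that |φ(f x) − φ(g x)| < ε for all x ∉ B. -/
open Set Bornology

/-- A bounded continuous function `φ : Y → ℂ` is a *Higson function* if for every
`R > 0` and `ε > 0` there is a bounded set `B ⊆ Y` such that `|φ(y') − φ(y)| < ε`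
whenever `d(y, y') ≤ R` and `y ∉ B`. -/
def IsHigsonFunction {Y : Type*} [MetricSpace Y] (φ : Y → ℂ) : Prop :=
  Continuous φ ∧ IsBounded (Set.range φ) ∧
    ∀ R : ℝ, 0 < R → ∀ ε : ℝ, 0 < ε → ∃ B : Set Y, IsBounded B ∧
      ∀ y y' : Y, dist y y' ≤ R → y ∉ B → ‖φ y' - φ y‖ < ε

theorem IsHigsonFunction.exists_isBounded_forall_dist_le {Y : Type*} [MetricSpace Y]
    {φ : Y → ℂ} (hφ : IsHigsonFunction φ) (R : ℝ) {ε : ℝ} (hε : 0 < ε) :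
    ∃ B : Set Y, IsBounded B ∧ ∀ y y' : Y, dist y y' ≤ R → y ∉ B → ‖φ y' - φ y‖ < ε := by
  obtain ⟨B, hB, hsmall⟩ := hφ.2.2 (max R 1) (lt_max_of_lt_right one_pos) ε hε
  exact ⟨B, hB, fun y y' hyy' hy => hsmall y y' (hyy'.trans (le_max_left R 1)) hy⟩

/-- If `f` and `g` are close maps with `f` metrically proper and `φ` is a Higson
function, then `φ ∘ f − φ ∘ g` vanishes at infinity. -/
theorem higson_comp_close_vanishes_at_infinity {X Y : Type*} [MetricSpace X] [MetricSpace Y]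
    (f g : X → Y) (hclose : ∃ C : ℝ, ∀ x : X, dist (f x) (g x) ≤ C)
    (hproper : ∀ D : Set Y, IsBounded D → IsBounded (f ⁻¹' D))
    (φ : Y → ℂ) (hφ : IsHigsonFunction φ) :
    ∀ ε : ℝ, 0 < ε → ∃ B : Set X, IsBounded B ∧
      ∀ x : X, x ∉ B → ‖φ (f x) - φ (g x)‖ < ε := by
  intro ε hε
  obtain ⟨C, hC⟩ := hclose
  obtain ⟨B, hB, hsmall⟩ := hφ.exists_isBounded_forall_dist_le C hε
  refine ⟨f ⁻¹' B, hproper B hB, fun x hx => ?_⟩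
  rw [norm_sub_rev]
  exact hsmall (f x) (g x) (hC x) hx
end

section
/- Identify the vertices of the rooted binary tree with finite Boolean strings (List Bool), a string x = (i₀, i₁, …, i_{n−1}) read little-endian (i₀ is the lowest digit), and equip them with the tree metric d(x, y) = length(x) + length(y) − 2·p(x, y), where p(x, y) is the length of the longest common prefix of x and y. Let succ denote binary increment on little-endian Boolean strings: flip the initial run of 1's (true's) to 0's and set the first 0 to 1; if x consists entirely of 1's then succ(x) has one more digit (0's followed by a final 1); succ of the empty string is (0), a single digit. Then for all strings x and y, d(succ(x), succ(y)) ≤ d(x, y) + 2. -/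
/-!
Increment changes a string only below the first `false`, and never lengthens it by more than one
digit. If `x` and `y` differ in their lowest digit (or one is the root), their geodesic passes
through the root, so `d(x, y) = |x| + |y|` and the length bound alone gives the claim. Otherwise
they share a lowest digit: a shared `false` becomes a shared `true` and nothing else moves, while
a shared `true` becomes a shared `false` and the increment carries into the subtrees, where
induction applies.
-/

/-- The length of the longest common prefix of two Boolean strings. -/
def lcpLen : List Bool → List Bool → ℕ
  | a :: x, b :: y => if a = b then lcpLen x y + 1 else 0
  | _, _ => 0

/-- The tree metric on the rooted binary tree of finite Boolean strings:
`d(x, y) = length x + length y − 2·lcpLen x y` (valued in `ℤ`). -/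
def treeDist (x y : List Bool) : ℤ :=
  (x.length : ℤ) + (y.length : ℤ) - 2 * (lcpLen x y : ℤ)

/-- Auxiliary binary increment on nonempty little-endian Boolean strings:
flip the initial run of `true`s to `false`s and set the first `false` to `true`;
a string of all `true`s gains one extra digit. -/
def succAux : List Bool → List Bool
  | [] => [true]
  | false :: x => true :: x
  | true :: x => false :: succAux x

/-- Binary increment on little-endian Boolean strings; the empty string (the root `*`)
is sent to the single digit `(0)`. -/
def succStr (x : List Bool) : List Bool :=
  if x = [] then [false] else succAux x

lemma treeDist_cons_cons (a : Bool) (x y : List Bool) :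
    treeDist (a :: x) (a :: y) = treeDist x y := by
  simp only [treeDist, lcpLen, if_true, List.length_cons]
  push_cast
  ring

lemma treeDist_eq_length_add_length_of_lcpLen_eq_zero {x y : List Bool} (h : lcpLen x y = 0) :
    treeDist x y = x.length + y.length := by
  simp [treeDist, h]

lemma treeDist_le_length_add_length (x y : List Bool) : treeDist x y ≤ x.length + y.length := by
  unfold treeDist
  omega

lemma treeDist_map_le_of_lcpLen_eq_zero {f : List Bool → List Bool}
    (hf : ∀ x, (f x).length ≤ x.length + 1) {x y : List Bool} (h : lcpLen x y = 0) :
    treeDist (f x) (f y) ≤ treeDist x y + 2 := by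
  rw [treeDist_eq_length_add_length_of_lcpLen_eq_zero h]
  have := treeDist_le_length_add_length (f x) (f y)
  have := hf x
  have := hf y
  omega

lemma length_succAux_le (x : List Bool) : (succAux x).length ≤ x.length + 1 := by
  induction x with
  | nil => simp [succAux]
  | cons a x ih => cases a <;> simp [succAux, ih]

lemma length_succStr_le (x : List Bool) : (succStr x).length ≤ x.length + 1 := by
  unfold succStr
  split_ifs with hx
  · simp [hx]
  · exact length_succAux_le x

lemma treeDist_succAux_le : ∀ x y : List Bool,
    treeDist (succAux x) (succAux y) ≤ treeDist x y + 2
  | a :: x, b :: y => by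
    by_cases hab : a = b
    · subst hab
      cases a
      · simp only [succAux, treeDist_cons_cons]
        omega
      · simpa only [succAux, treeDist_cons_cons] using treeDist_succAux_le x y
    · exact treeDist_map_le_of_lcpLen_eq_zero length_succAux_le (by simp [lcpLen, hab])
  | [], _ => treeDist_map_le_of_lcpLen_eq_zero length_succAux_le (by simp [lcpLen])
  | _ :: _, [] => treeDist_map_le_of_lcpLen_eq_zero length_succAux_le (by simp [lcpLen])

/-- The adding machine on the binary tree is large-scale Lipschitz:
`d(succ x, succ y) ≤ d(x, y) + 2`. -/
theorem treeDist_succStr_le (x y : List Bool) :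
    treeDist (succStr x) (succStr y) ≤ treeDist x y + 2 := by
  by_cases hroot : x = [] ∨ y = []
  · have hlcp : lcpLen x y = 0 := by
      rcases hroot with rfl | rfl <;> cases ‹List Bool› <;> rfl
    exact treeDist_map_le_of_lcpLen_eq_zero length_succStr_le hlcp
  · push Not at hroot
    simpa only [succStr, hroot.1, hroot.2, if_false] using treeDist_succAux_le x y
end

section
/- Let σ : (ℕ → Bool) → (ℕ → Bool) be the binary odometer (adding machine): if x has some index with value false, let k be the least such index and define σ(x)(n) = false for n < k, σ(x)(k) = true, and σ(x)(n) = x(n) for n > k; if x is constantly true, define σ(x) to be constantly false. Then the action of ℕ on the Cantor space ℕ → Bool (with the product topology) generated by σ is minimal: for every x : ℕ → Bool, the forward orbit {σⁿ(x) : n ∈ ℕ} is dense in ℕ → Bool. -/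
/-!
The odometer is "add one with carry" on little-endian binary sequences. Applying it twice
never changes bit 0 and acts on the remaining bits as a single odometer step, so `σ^[2n]`
fixes bit 0 and is `σ^[n]` on the tail. To hit a cylinder prescribing the first `m + 1` bits,
first apply `σ` at most once to fix bit 0 (since `σ` flips bit 0), then use induction on `m`
for the tail. Cylinders form a basis of the product topology, so every orbit is dense.
-/

open Set

/-- The binary odometer (adding machine) on Cantor space `ℕ → Bool`: if `x` has a
least index `k` with value `false`, flip all entries below `k` to `false`, set entry
`k` to `true`, and keep the rest; if `x` is constantly `true`, return the constantly
`false` sequence. -/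
noncomputable def odometer (x : ℕ → Bool) : ℕ → Bool :=
  letI := Classical.dec (∃ k, x k = false)
  if h : ∃ k, x k = false then
    fun n => if n < Nat.find h then false else if n = Nat.find h then true else x n
  else fun _ => false

open Function PiNat

theorem odometer_apply_zero (x : ℕ → Bool) : odometer x 0 = !x 0 := by
  by_cases h : ∃ k, x k = false
  · cases hx : x 0
    · simp [odometer, h, (Nat.find_eq_zero h).mpr hx]
    · have hfind : Nat.find h ≠ 0 := fun h0 => by simp [(Nat.find_eq_zero h).mp h0] at hx
      simp [odometer, h, Nat.pos_of_ne_zero hfind]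
  · simp_all [odometer]

theorem odometer_comp_succ_of_apply_zero_false {x : ℕ → Bool} (hx : x 0 = false) :
    odometer x ∘ Nat.succ = x ∘ Nat.succ := by
  have h : ∃ k, x k = false := ⟨0, hx⟩
  funext n
  simp [odometer, h, (Nat.find_eq_zero h).mpr hx]

theorem odometer_comp_succ_of_apply_zero_true {x : ℕ → Bool} (hx : x 0 = true) :
    odometer x ∘ Nat.succ = odometer (x ∘ Nat.succ) := by
  funext n
  by_cases h : ∃ k, x (k + 1) = false
  · have h' : ∃ k, x k = false := let ⟨k, hk⟩ := h; ⟨k + 1, hk⟩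
    have hfind := Nat.find_comp_succ h' h (by simp [hx])
    simp [odometer, h, h', hfind]
  · have h' : ¬ ∃ k, x k = false := by
      rintro ⟨_ | k, hk⟩
      · simp_all
      · exact h ⟨k, hk⟩
    simp [odometer, h, h']

theorem odometer_odometer_apply_zero (x : ℕ → Bool) : odometer (odometer x) 0 = x 0 := by
  rw [odometer_apply_zero, odometer_apply_zero, Bool.not_not]

theorem odometer_odometer_comp_succ (x : ℕ → Bool) :
    odometer (odometer x) ∘ Nat.succ = odometer (x ∘ Nat.succ) := by
  cases hx : x 0
  · rw [odometer_comp_succ_of_apply_zero_true (by rw [odometer_apply_zero, hx]; rfl),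
      odometer_comp_succ_of_apply_zero_false hx]
  · rw [odometer_comp_succ_of_apply_zero_false (by rw [odometer_apply_zero, hx]; rfl),
      odometer_comp_succ_of_apply_zero_true hx]

theorem odometer_iterate_two_mul_apply_zero (n : ℕ) (x : ℕ → Bool) :
    odometer^[2 * n] x 0 = x 0 := by
  have : Semiconj (· 0) (odometer^[2]) id := odometer_odometer_apply_zero
  rw [iterate_mul, (this.iterate_right n).eq, iterate_id, id]

theorem odometer_iterate_two_mul_comp_succ (n : ℕ) (x : ℕ → Bool) :
    odometer^[2 * n] x ∘ Nat.succ = odometer^[n] (x ∘ Nat.succ) := by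
  have : Semiconj (· ∘ Nat.succ) (odometer^[2]) odometer := odometer_odometer_comp_succ
  rw [iterate_mul, (this.iterate_right n).eq]

theorem exists_odometer_iterate_mem_cylinder (x y : ℕ → Bool) (m : ℕ) :
    ∃ n, odometer^[n] x ∈ cylinder y m := by
  induction m generalizing x y with
  | zero => exact ⟨0, by simp [cylinder_zero]⟩
  | succ m ih =>
    obtain ⟨k, hk⟩ : ∃ k, odometer^[k] x 0 = y 0 := by
      by_cases hx : x 0 = y 0
      · exact ⟨0, hx⟩
      · exact ⟨1, by rw [iterate_one, odometer_apply_zero, Bool.not_eq]; exact hx⟩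
    obtain ⟨n, hn⟩ := ih (odometer^[k] x ∘ Nat.succ) (y ∘ Nat.succ)
    refine ⟨2 * n + k, mem_cylinder_iff.mpr fun i hi => ?_⟩
    rw [iterate_add_apply]
    cases i with
    | zero => rw [odometer_iterate_two_mul_apply_zero, hk]
    | succ i =>
      rw [← odometer_iterate_two_mul_comp_succ] at hn
      exact mem_cylinder_iff.mp hn i (by omega)

/-- The odometer action of `ℕ` on Cantor space (with the product topology) is
minimal: every forward orbit is dense. -/
theorem odometer_orbit_dense (x : ℕ → Bool) :
    Dense (Set.range fun n : ℕ => odometer^[n] x) := by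
  rw [(isTopologicalBasis_cylinders fun _ => Bool).dense_iff]
  rintro _ ⟨y, m, rfl⟩ -
  obtain ⟨n, hn⟩ := exists_odometer_iterate_mem_cylinder x y m
  exact ⟨_, hn, n, rfl⟩
end
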